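/- Let M and N be positive integers and n a nonnegative integer. Then the number of nonincreasing sequences of nonnegative integers δ = (δ_1, …, δ_N) with δ_1 + ⋯ + δ_N = n satisfying 0 ≤ δ_i − δ_{i+1} ≤ M + N − i for all 1 ≤ i ≤ N (with the convention δ_{N+1} = 0) equals the number of pairs of partitions (π, μ) with |π| + |μ| = n such that every part of π lies in the interval [M+1, M+N−1] with the part M+i appearing at most N−i times for each 1 ≤ i ≤ N−1, and μ has at most N parts each at most M. -/

import Mathlib

/-- A partition: a finite nonincreasing list of positive integers. -/
structure Partn where
  parts : List ℕ
  sorted : parts.Pairwise (· ≥ ·)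
  pos : ∀ x ∈ parts, 0 < x

namespace Partn

/-- The weight `|λ|` of a partition: the sum of its parts. -/
def wt (p : Partn) : ℕ := p.parts.sum

/-- The length `ℓ(λ)`: the number of parts. -/
def len (p : Partn) : ℕ := p.parts.length

/-- The `j`-th largest part `λ_j` (1-indexed), with `λ_j = 0` for `j > ℓ(λ)`. -/
def part (p : Partn) (j : ℕ) : ℕ := p.parts.getD (j - 1) 0

/-- `f_j(λ)`: the number of parts of `λ` equal to `j`. -/
def freq (p : Partn) (j : ℕ) : ℕ := p.parts.count j

/-- The empty partition. -/
def empty : Partn := ⟨[], List.Pairwise.nil, by simp⟩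

end Partn

/-!
Writing `δ` through its differences `g_i = δ_i - δ_{i+1}`, the left side counts tuples with
`g_i ≤ M + N - i`, weighted by `∑ i g_i`; its generating function is
`∏_{i=1}^{N} (1 - q^{i(M+N+1-i)}) / (1 - q^i)`. On the right, `π` is recorded by its
multiplicities and `μ` by the tuple `(μ_1, …, μ_N)`, which gives
`∏_{i=1}^{N-1} (1 - q^{(M+i)(N+1-i)}) / (1 - q^{M+i})` times the Gaussian binomial
`∏_{i=1}^{N} (1 - q^{M+i}) / (1 - q^i)`. After clearing the common denominator
`∏ (1 - q^i)`, the substitution `i ↦ N + 1 - i` turns one numerator into the other.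
All generating functions are polynomials in `ℤ[q]`, where the denominator cancels.
-/

open Finset Polynomial

section WeightGF

variable {α β : Type*}

noncomputable def weightGF (s : Finset α) (w : α → ℕ) : ℤ[X] := ∑ a ∈ s, X ^ w a

theorem coeff_weightGF (s : Finset α) (w : α → ℕ) (n : ℕ) :
    (weightGF s w).coeff n = #{a ∈ s | w a = n} := by
  simp [weightGF, finsetSum_coeff, coeff_X_pow, eq_comm]

theorem weightGF_product (s : Finset α) (t : Finset β) (w : α → ℕ) (v : β → ℕ) :
    weightGF (s ×ˢ t) (fun p => w p.1 + v p.2) = weightGF s w * weightGF t v := by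
  simp [weightGF, sum_product, pow_add, sum_mul_sum]

theorem weightGF_piFinset {ι : Type*} [Fintype ι] [DecidableEq ι] (s : ι → Finset β)
    (w : ι → β → ℕ) :
    weightGF (Fintype.piFinset s) (fun g => ∑ i, w i (g i)) = ∏ i, weightGF (s i) (w i) := by
  simp only [weightGF, prod_univ_sum, prod_pow_eq_pow_sum]

theorem weightGF_Iic_mul_one_sub (d c : ℕ) :
    weightGF (Iic c) (d * ·) * (1 - X ^ d) = 1 - X ^ (d * (c + 1)) := by
  rw [weightGF, ← Nat.range_succ_eq_Iic]
  simp only [pow_mul, geom_sum_mul_neg]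

end WeightGF

theorem Fin.antitone_cons {α : Type*} [Preorder α] {n : ℕ} {f : Fin n → α} {a : α} :
    Antitone (Fin.cons a f : Fin (n + 1) → α) ↔ (∀ j, f j ≤ a) ∧ Antitone f := by
  simpa only [antitone_iff_forall_lt, Relator.LiftFun, ge_iff_le] using
    Fin.liftFun_cons (α := α) (· ≥ ·) (f := f) (a := a)

section BoxTuples

/-- A partition with at most `N` parts, each at most `M`, listed by its first `N` parts. -/
def boxTuples (N M : ℕ) : Finset (Fin N → ℕ) :=
  {d ∈ Fintype.piFinset fun _ => Iic M | Antitone d}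

variable {N M : ℕ}

theorem mem_boxTuples {d : Fin N → ℕ} : d ∈ boxTuples N M ↔ (∀ i, d i ≤ M) ∧ Antitone d := by
  simp [boxTuples]

theorem boxTuples_zero_left : boxTuples 0 M = {Fin.elim0} :=
  eq_singleton_iff_unique_mem.2
    ⟨mem_boxTuples.2 ⟨fun i => i.elim0, Subsingleton.antitone _⟩, fun _ _ => Subsingleton.elim _ _⟩

theorem boxTuples_zero_right : boxTuples N 0 = {0} :=
  eq_singleton_iff_unique_mem.2 ⟨mem_boxTuples.2 ⟨fun _ => le_rfl, antitone_const⟩,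
    fun _ hd => funext fun i => Nat.le_zero.1 ((mem_boxTuples.1 hd).1 i)⟩

theorem filter_boxTuples_le : {d ∈ boxTuples (N + 1) (M + 1) | d 0 ≤ M} = boxTuples (N + 1) M := by
  ext d
  simp only [mem_filter, mem_boxTuples]
  exact ⟨fun ⟨⟨_, hd⟩, h0⟩ => ⟨fun i => (hd (Fin.zero_le i)).trans h0, hd⟩,
    fun ⟨hM, hd⟩ => ⟨⟨fun i => (hM i).trans M.le_succ, hd⟩, hM 0⟩⟩

theorem filter_boxTuples_not_le :
    {d ∈ boxTuples (N + 1) (M + 1) | ¬d 0 ≤ M} =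
      (boxTuples N (M + 1)).map ⟨Fin.cons (M + 1), Fin.cons_right_injective _⟩ := by
  ext d
  simp only [mem_filter, mem_map, mem_boxTuples, Function.Embedding.coeFn_mk]
  constructor
  · rintro ⟨⟨hM, hd⟩, h0⟩
    have hd0 : d 0 = M + 1 := (hM 0).antisymm (not_le.1 h0)
    refine ⟨Fin.tail d, ⟨fun i => hM i.succ, hd.comp_monotone Fin.strictMono_succ.monotone⟩, ?_⟩
    rw [← hd0, Fin.cons_self_tail]
  · rintro ⟨e, ⟨he, hanti⟩, rfl⟩
    exact ⟨⟨Fin.cases le_rfl he, Fin.antitone_cons.2 ⟨he, hanti⟩⟩, by simp⟩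

theorem weightGF_boxTuples_succ_succ :
    weightGF (boxTuples (N + 1) (M + 1)) (∑ i, · i) =
      weightGF (boxTuples (N + 1) M) (∑ i, · i) +
        X ^ (M + 1) * weightGF (boxTuples N (M + 1)) (∑ i, · i) := by
  rw [weightGF, ← sum_filter_add_sum_filter_not _ (fun d => d 0 ≤ M), filter_boxTuples_le,
    filter_boxTuples_not_le, sum_map, weightGF, weightGF, mul_sum]
  simp [Fin.sum_cons, pow_add]

variable (N M) in
theorem weightGF_boxTuples_mul :
    weightGF (boxTuples N M) (∑ i, · i) * ∏ i ∈ range N, (1 - X ^ (i + 1)) =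
      ∏ i ∈ range N, (1 - X ^ (M + i + 1)) := by
  induction N generalizing M with
  | zero => simp [boxTuples_zero_left, weightGF]
  | succ N ihN =>
    induction M with
    | zero => simp [boxTuples_zero_right, weightGF]
    | succ M ihM =>
      have hshift : ∀ i, M + (i + 1) + 1 = M + 1 + i + 1 := by omega
      rw [weightGF_boxTuples_succ_succ, add_mul, ihM,
        prod_range_succ' (fun i => 1 - X ^ (M + i + 1)), prod_range_succ (fun i => 1 - X ^ (i + 1)),
        prod_range_succ (fun i => 1 - X ^ (M + 1 + i + 1))]
      simp only [hshift]
      linear_combination (X ^ (M + 1) * (1 - X ^ (N + 1))) * ihN (M + 1)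

end BoxTuples

theorem prod_weightGF_Iic_mul (d c : ℕ → ℕ) (n : ℕ) :
    (∏ i : Fin n, weightGF (Iic (c i)) (d i * ·)) * ∏ i ∈ range n, (1 - X ^ d i) =
      ∏ i ∈ range n, (1 - X ^ (d i * (c i + 1))) := by
  rw [Fin.prod_univ_eq_prod_range (fun i => weightGF (Iic (c i)) (d i * ·)), ← prod_mul_distrib]
  exact prod_congr rfl fun i _ => weightGF_Iic_mul_one_sub (d i) (c i)

theorem one_sub_X_pow_succ_ne_zero (k : ℕ) : (1 - X ^ (k + 1) : ℤ[X]) ≠ 0 := fun h => by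
  simpa using congrArg (eval 0) h

theorem weightGF_piFinset_Iic_eq (M N : ℕ) :
    weightGF (Fintype.piFinset fun i : Fin N => Iic (M + N - (i + 1)))
        (fun g => ∑ i, (i + 1) * g i) =
      weightGF ((Fintype.piFinset fun i : Fin (N - 1) => Iic (N - (i + 1))) ×ˢ boxTuples N M)
        (fun p => ∑ i, (M + i + 1) * p.1 i + ∑ j, p.2 j) := by
  rw [weightGF_product _ _ (fun x : Fin (N - 1) → ℕ => ∑ i, (M + i + 1) * x i)
      (fun d : Fin N → ℕ => ∑ j, d j),
    weightGF_piFinset _ fun (i : Fin (N - 1)) k => (M + i + 1) * k,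
    weightGF_piFinset _ fun (i : Fin N) k => (i + 1) * k]
  rcases N with _ | K
  · simp [boxTuples_zero_left, weightGF]
  rw [Nat.add_sub_cancel]
  refine mul_right_cancel₀ (b := ∏ i ∈ range (K + 1), (1 - X ^ (i + 1)))
    (prod_ne_zero_iff.2 fun i _ => one_sub_X_pow_succ_ne_zero i) ?_
  rw [prod_weightGF_Iic_mul (· + 1) (fun i => M + (K + 1) - (i + 1)), mul_assoc,
    weightGF_boxTuples_mul, prod_range_succ (fun i => 1 - X ^ (M + i + 1)), ← mul_assoc,
    prod_weightGF_Iic_mul (M + · + 1) (fun i => K + 1 - (i + 1)),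
    ← prod_range_reflect _ (K + 1), prod_range_succ]
  -- reindex the left side by `i ↦ K - i`; its last factor is then `1 - X ^ (M + K + 1)`
  congr 1
  · refine prod_congr rfl fun j hj => ?_
    rw [mem_range] at hj
    rw [mul_comm]
    congr 3 <;> omega
  · simp

section Differences

variable {N : ℕ}

def nextTerm (d : Fin N → ℕ) (j : Fin N) : ℕ := if h : j.1 + 1 < N then d ⟨j.1 + 1, h⟩ else 0

def diffs (d : Fin N → ℕ) (j : Fin N) : ℕ := d j - nextTerm d j

def tailSum (g : Fin N → ℕ) (j : Fin N) : ℕ := ∑ i ∈ Ici j, g i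

theorem tailSum_eq_add_nextTerm (g : Fin N → ℕ) (j : Fin N) :
    tailSum g j = g j + nextTerm (tailSum g) j := by
  rw [tailSum, Ici_eq_cons_Ioi, sum_cons, nextTerm]
  congr 1
  split_ifs with h
  · refine sum_congr ?_ fun _ _ => rfl
    ext i
    simp only [mem_Ioi, mem_Ici, Fin.lt_def, Fin.le_def]
    omega
  · refine sum_eq_zero fun i hi => absurd hi ?_
    simp only [mem_Ioi, Fin.lt_def]
    omega

theorem nextTerm_tailSum_le (g : Fin N → ℕ) (j : Fin N) : nextTerm (tailSum g) j ≤ tailSum g j :=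
  (tailSum_eq_add_nextTerm g j).symm ▸ Nat.le_add_left _ _

theorem sum_tailSum (g : Fin N → ℕ) : ∑ j, tailSum g j = ∑ i, (i.1 + 1) * g i := by
  unfold tailSum
  rw [sum_comm' (t' := univ) (s' := Iic) (by simp)]
  simp [Fin.card_Iic]

theorem diffs_tailSum (g : Fin N → ℕ) : diffs (tailSum g) = g :=
  funext fun j => by rw [diffs.eq_def, tailSum_eq_add_nextTerm g j, Nat.add_sub_cancel]

theorem tailSum_diffs {d : Fin N → ℕ} (hd : ∀ j, nextTerm d j ≤ d j) : tailSum (diffs d) = d := by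
  -- downward induction on `j`, indexed by `k ≥ N - j`
  suffices ∀ k (j : Fin N), N ≤ j.1 + k → tailSum (diffs d) j = d j from
    funext fun j => this N j (Nat.le_add_left _ _)
  intro k
  induction k with
  | zero => exact fun j hj => absurd j.2 (by omega)
  | succ k ih =>
    intro j hj
    have hnext : nextTerm (tailSum (diffs d)) j = nextTerm d j := by
      unfold nextTerm
      split_ifs with h
      · exact ih _ (by simp only; omega)
      · rfl
    rw [tailSum_eq_add_nextTerm, hnext, diffs.eq_def, Nat.sub_add_cancel (hd j)]

theorem ncard_diffs_le (c : Fin N → ℕ) (n : ℕ) :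
    {d : Fin N → ℕ | ∑ j, d j = n ∧ ∀ j, nextTerm d j ≤ d j ∧ diffs d j ≤ c j}.ncard =
      #{g ∈ Fintype.piFinset fun i => Iic (c i) | ∑ i, (i.1 + 1) * g i = n} := by
  rw [← Set.ncard_coe_finset]
  refine Set.ncard_congr (fun d _ => diffs d) ?_ ?_ ?_
  · rintro d ⟨hsum, hd⟩
    simp only [coe_filter, Fintype.mem_piFinset, mem_Iic, Set.mem_ofPred_eq]
    refine ⟨fun j => (hd j).2, ?_⟩
    rw [← sum_tailSum, tailSum_diffs fun j => (hd j).1, hsum]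
  · rintro d d' ⟨-, hd⟩ ⟨-, hd'⟩ h
    rw [← tailSum_diffs fun j => (hd j).1, ← tailSum_diffs fun j => (hd' j).1, h]
  · intro g hg
    simp only [coe_filter, Fintype.mem_piFinset, mem_Iic, Set.mem_ofPred_eq] at hg
    refine ⟨tailSum g, ⟨by rw [sum_tailSum, hg.2], fun j => ⟨nextTerm_tailSum_le g j, ?_⟩⟩,
      diffs_tailSum g⟩
    rw [diffs_tailSum]
    exact hg.1 j

end Differences

section Multisets

variable (M : ℕ) {K : ℕ}

def multisetOfCounts (x : Fin K → ℕ) : Multiset ℕ := ∑ i, Multiset.replicate (x i) (M + i + 1)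

theorem count_multisetOfCounts (x : Fin K → ℕ) (i : Fin K) :
    (multisetOfCounts M x).count (M + i + 1) = x i := by
  simp [multisetOfCounts, Multiset.count_sum', Multiset.count_replicate, Fin.val_inj]

theorem exists_eq_of_mem_multisetOfCounts {x : Fin K → ℕ} {v : ℕ} (hv : v ∈ multisetOfCounts M x) :
    ∃ i : Fin K, v = M + i + 1 := by
  simp only [multisetOfCounts, Multiset.mem_sum, mem_univ, true_and, Multiset.mem_replicate] at hv
  obtain ⟨i, -, rfl⟩ := hv
  exact ⟨i, rfl⟩

theorem sum_multisetOfCounts (x : Fin K → ℕ) :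
    (multisetOfCounts M x).sum = ∑ i, (M + i + 1) * x i := by
  rw [multisetOfCounts, ← Multiset.coe_sumAddMonoidHom, map_sum]
  simp [mul_comm]

theorem eq_multisetOfCounts {s : Multiset ℕ} (hs : ∀ v ∈ s, ∃ i : Fin K, v = M + i + 1) :
    s = multisetOfCounts M fun i : Fin K => s.count (M + i + 1) := by
  ext v
  by_cases hv : ∃ i : Fin K, v = M + i + 1
  · obtain ⟨i, rfl⟩ := hv
    rw [count_multisetOfCounts]
  · rw [Multiset.count_eq_zero_of_notMem fun h => hv (hs v h),
      Multiset.count_eq_zero_of_notMem fun h => hv (exists_eq_of_mem_multisetOfCounts M h)]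

end Multisets

theorem Antitone.pairwise_ofFn {N : ℕ} {d : Fin N → ℕ} (hd : Antitone d) :
    (List.ofFn d).Pairwise (· ≥ ·) :=
  List.pairwise_ofFn.2 fun _ _ hij => hd hij.le

namespace List

theorem getD_filter_pos {l : List ℕ} (hl : l.Pairwise (· ≥ ·)) (j : ℕ) :
    (l.filter (0 < ·)).getD j 0 = l.getD j 0 := by
  induction l generalizing j with
  | nil => rfl
  | cons a t ih =>
    rcases Nat.eq_zero_or_pos a with rfl | ha
    · have hzero : ∀ x ∈ 0 :: t, x = 0 := by
        simpa [Nat.le_zero] using (pairwise_cons.1 hl).1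
      rw [filter_eq_nil_iff.2 (by simpa using hzero), getD_nil, getD_eq_getElem?_getD]
      cases h : (0 :: t)[j]? with
      | none => rfl
      | some x => exact (hzero x (mem_of_getElem? h)).symm
    · rw [filter_cons_of_pos (by simpa using ha)]
      cases j with
      | zero => rfl
      | succ j => exact ih (pairwise_cons.1 hl).2 j

theorem sum_univ_getD {l : List ℕ} {N : ℕ} (hl : l.length ≤ N) :
    ∑ j : Fin N, l.getD j 0 = l.sum := by
  induction l generalizing N with
  | nil => simp
  | cons a t ih =>
    obtain ⟨N, rfl⟩ : ∃ N', N = N' + 1 := ⟨N - 1, by rw [length_cons] at hl; omega⟩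
    simp only [Fin.sum_univ_succ, Fin.val_zero, getD_cons_zero, Fin.val_succ, getD_cons_succ,
      ih (Nat.le_of_succ_le_succ hl), sum_cons]

theorem eq_of_getD_eq {l₁ l₂ : List ℕ} (h₁ : ∀ x ∈ l₁, 0 < x) (h₂ : ∀ x ∈ l₂, 0 < x)
    (h : ∀ j, l₁.getD j 0 = l₂.getD j 0) : l₁ = l₂ := by
  have key : ∀ l : List ℕ, (∀ x ∈ l, 0 < x) → ∀ j,
      l[j]? = if l.getD j 0 = 0 then none else some (l.getD j 0) := by
    intro l hl j
    rw [getD_eq_getElem?_getD]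
    cases hj : l[j]? with
    | none => rfl
    | some x => simp [(hl x (mem_of_getElem? hj)).ne']
  exact ext_getElem? fun j => by rw [key l₁ h₁, key l₂ h₂, h]

theorem getD_antitone {l : List ℕ} (hl : l.Pairwise (· ≥ ·)) : Antitone (l.getD · 0) := by
  intro a b hab
  simp only [getD_eq_getElem?_getD]
  cases hb : l[b]? with
  | none => exact Nat.zero_le _
  | some y =>
    obtain ⟨hb', rfl⟩ := getElem?_eq_some_iff.1 hb
    rw [getElem?_eq_getElem (hab.trans_lt hb'), Option.getD_some, Option.getD_some]
    exact hl.rel_get_of_le (a := ⟨a, hab.trans_lt hb'⟩) (b := ⟨b, hb'⟩) hab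

end List

namespace Partn

theorem ext_parts {p q : Partn} (h : p.parts = q.parts) : p = q := by
  cases p
  cases q
  simpa using h

theorem eq_of_coe_parts_eq {p q : Partn} (h : (p.parts : Multiset ℕ) = q.parts) : p = q :=
  ext_parts ((Multiset.coe_eq_coe.1 h).eq_of_pairwise' p.sorted q.sorted)

def ofMultiset (s : Multiset ℕ) (hs : ∀ x ∈ s, 0 < x) : Partn where
  parts := s.sort (· ≥ ·)
  sorted := Multiset.pairwise_sort _ _
  pos x hx := hs x ((Multiset.mem_sort _).1 hx)

theorem coe_parts_ofMultiset (s : Multiset ℕ) (hs : ∀ x ∈ s, 0 < x) :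
    ((ofMultiset s hs).parts : Multiset ℕ) = s :=
  Multiset.sort_eq _ _

theorem freq_ofMultiset (s : Multiset ℕ) (hs : ∀ x ∈ s, 0 < x) (v : ℕ) :
    (ofMultiset s hs).freq v = s.count v := by
  rw [freq, ← Multiset.coe_count, coe_parts_ofMultiset]

theorem wt_ofMultiset (s : Multiset ℕ) (hs : ∀ x ∈ s, 0 < x) : (ofMultiset s hs).wt = s.sum := by
  rw [wt, ← Multiset.sum_coe, coe_parts_ofMultiset]

section Counts

variable (M : ℕ) {K : ℕ}

def ofCounts (x : Fin K → ℕ) : Partn :=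
  ofMultiset (multisetOfCounts M x) fun v hv => by
    obtain ⟨i, rfl⟩ := exists_eq_of_mem_multisetOfCounts M hv
    exact Nat.succ_pos _

theorem freq_ofCounts (x : Fin K → ℕ) (i : Fin K) : (ofCounts M x).freq (M + i + 1) = x i :=
  (freq_ofMultiset _ _ _).trans (count_multisetOfCounts M x i)

theorem wt_ofCounts (x : Fin K → ℕ) : (ofCounts M x).wt = ∑ i, (M + i + 1) * x i :=
  (wt_ofMultiset _ _).trans (sum_multisetOfCounts M x)

theorem exists_eq_of_mem_parts_ofCounts {x : Fin K → ℕ} {v : ℕ} (hv : v ∈ (ofCounts M x).parts) :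
    ∃ i : Fin K, v = M + i + 1 := by
  rw [← Multiset.mem_coe, ofCounts, coe_parts_ofMultiset] at hv
  exact exists_eq_of_mem_multisetOfCounts M hv

theorem eq_ofCounts_freq {p : Partn} (hp : ∀ v ∈ p.parts, M + 1 ≤ v ∧ v ≤ M + K) :
    p = ofCounts M fun i : Fin K => p.freq (M + i + 1) := by
  refine eq_of_coe_parts_eq ?_
  rw [ofCounts, coe_parts_ofMultiset]
  simp only [freq, ← Multiset.coe_count]
  refine eq_multisetOfCounts M fun v hv => ?_
  have := hp v hv
  exact ⟨⟨v - M - 1, by omega⟩, by simp only; omega⟩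

end Counts

theorem part_succ (p : Partn) (j : ℕ) : p.part (j + 1) = p.parts.getD j 0 := rfl

theorem part_antitone (p : Partn) : Antitone p.part :=
  (List.getD_antitone p.sorted).comp_monotone fun _ _ h => Nat.sub_le_sub_right h 1

theorem part_le_of_forall_le {p : Partn} {M : ℕ} (hp : ∀ x ∈ p.parts, x ≤ M) (j : ℕ) :
    p.part j ≤ M := by
  rw [part, List.getD_eq_getElem?_getD]
  cases hj : p.parts[j - 1]? with
  | none => exact Nat.zero_le M
  | some x => exact hp x (List.mem_of_getElem? hj)

variable {N : ℕ}

theorem sum_part_succ {p : Partn} (hp : p.len ≤ N) : ∑ j : Fin N, p.part (j + 1) = p.wt :=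
  List.sum_univ_getD hp

theorem eq_of_part_succ_eq {p q : Partn} (hp : p.len ≤ N) (hq : q.len ≤ N)
    (h : ∀ j : Fin N, p.part (j + 1) = q.part (j + 1)) : p = q := by
  refine ext_parts <| List.eq_of_getD_eq p.pos q.pos fun j => ?_
  by_cases hj : j < N
  · exact h ⟨j, hj⟩
  · unfold len at hp hq
    rw [List.getD_eq_default _ _ (by omega), List.getD_eq_default _ _ (by omega)]

def ofAntitone (d : Fin N → ℕ) (hd : Antitone d) : Partn where
  parts := (List.ofFn d).filter (0 < ·)
  sorted := hd.pairwise_ofFn.filter _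
  pos x hx := by simpa using (List.mem_filter.1 hx).2

variable {d : Fin N → ℕ} (hd : Antitone d)

theorem parts_ofAntitone : (ofAntitone d hd).parts = (List.ofFn d).filter (0 < ·) := rfl

theorem len_ofAntitone_le : (ofAntitone d hd).len ≤ N :=
  (List.length_filter_le _ _).trans List.length_ofFn.le

theorem part_succ_ofAntitone (j : Fin N) : (ofAntitone d hd).part (j + 1) = d j := by
  rw [part_succ, parts_ofAntitone, List.getD_filter_pos hd.pairwise_ofFn]
  simp

theorem exists_eq_of_mem_parts_ofAntitone {x : ℕ} (hx : x ∈ (ofAntitone d hd).parts) :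
    ∃ j, d j = x := by
  rw [parts_ofAntitone, List.mem_filter, List.mem_ofFn] at hx
  exact hx.1

end Partn

theorem ncard_partitionPairs (M N n : ℕ) :
    {q : Partn × Partn | q.1.wt + q.2.wt = n ∧
        (∀ x ∈ q.1.parts, M + 1 ≤ x ∧ x ≤ M + N - 1) ∧
        (∀ i, 1 ≤ i → i ≤ N - 1 → q.1.parts.count (M + i) ≤ N - i) ∧
        q.2.len ≤ N ∧ (∀ x ∈ q.2.parts, x ≤ M)}.ncard =
      #{p ∈ (Fintype.piFinset fun i : Fin (N - 1) => Iic (N - (i + 1))) ×ˢ boxTuples N M |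
          ∑ i : Fin (N - 1), (M + (i : ℕ) + 1) * p.1 i + ∑ j, p.2 j = n} := by
  have hcounts : ∀ π : Partn, (∀ x ∈ π.parts, M + 1 ≤ x ∧ x ≤ M + N - 1) →
      π = Partn.ofCounts M fun i : Fin (N - 1) => π.freq (M + i + 1) := fun π hπ =>
    Partn.eq_ofCounts_freq M fun x hx => ⟨(hπ x hx).1, by have := hπ x hx; omega⟩
  rw [← Set.ncard_coe_finset]
  refine Set.ncard_congr (fun q _ => (fun i => q.1.freq (M + i + 1), fun j => q.2.part (j + 1)))
    ?_ ?_ ?_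
  · rintro ⟨π, μ⟩ ⟨hwt, hπ, hfreq, hlen, hμ⟩
    simp only [coe_filter, mem_product, Fintype.mem_piFinset, mem_Iic, mem_boxTuples,
      Set.mem_ofPred_eq]
    refine ⟨⟨fun i => hfreq (i + 1) (Nat.le_add_left _ _) (by omega),
      fun j => μ.part_le_of_forall_le hμ _,
      μ.part_antitone.comp_monotone fun _ _ h => Nat.succ_le_succ h⟩, ?_⟩
    rw [← Partn.wt_ofCounts, ← hcounts π hπ, Partn.sum_part_succ hlen, hwt]
  · rintro ⟨π, μ⟩ ⟨π', μ'⟩ ⟨-, hπ, -, hlen, -⟩ ⟨-, hπ', -, hlen', -⟩ h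
    simp only [Prod.mk.injEq, funext_iff] at h
    refine Prod.ext ?_ (Partn.eq_of_part_succ_eq hlen hlen' h.2)
    rw [hcounts π hπ, hcounts π' hπ']
    simp only [h.1]
  · rintro ⟨x, d⟩ hxd
    simp only [coe_filter, mem_product, Fintype.mem_piFinset, mem_Iic, mem_boxTuples,
      Set.mem_ofPred_eq] at hxd
    obtain ⟨⟨hx, hdM, hd⟩, hwt⟩ := hxd
    refine ⟨(Partn.ofCounts M x, Partn.ofAntitone d hd), ⟨?_, fun v hv => ?_, fun i hi hiN => ?_,
      Partn.len_ofAntitone_le hd, fun v hv => ?_⟩, ?_⟩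
    · rw [Partn.wt_ofCounts, ← Partn.sum_part_succ (Partn.len_ofAntitone_le hd)]
      simpa only [Partn.part_succ_ofAntitone] using hwt
    · obtain ⟨i, rfl⟩ := Partn.exists_eq_of_mem_parts_ofCounts M hv
      omega
    · obtain ⟨k, rfl⟩ : ∃ k, i = k + 1 := ⟨i - 1, by omega⟩
      rw [← add_assoc]
      exact (Partn.freq_ofCounts M x ⟨k, by omega⟩).trans_le (hx _)
    · obtain ⟨j, rfl⟩ := Partn.exists_eq_of_mem_parts_ofAntitone hd hv
      exact hdM j
    · exact Prod.ext (funext (Partn.freq_ofCounts M x)) (funext (Partn.part_succ_ofAntitone hd))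

theorem C_eq_D_general (M N n : ℕ) :
    {d : Fin N → ℕ | (∑ j, d j) = n ∧
        ∀ j : Fin N,
          (if h : j.1 + 1 < N then d ⟨j.1 + 1, h⟩ else 0) ≤ d j ∧
          d j - (if h : j.1 + 1 < N then d ⟨j.1 + 1, h⟩ else 0) ≤
            M + N - (j.1 + 1)}.ncard =
      {q : Partn × Partn | q.1.wt + q.2.wt = n ∧
        (∀ x ∈ q.1.parts, M + 1 ≤ x ∧ x ≤ M + N - 1) ∧
        (∀ i, 1 ≤ i → i ≤ N - 1 → q.1.parts.count (M + i) ≤ N - i) ∧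
        q.2.len ≤ N ∧ (∀ x ∈ q.2.parts, x ≤ M)}.ncard := by
  have hgf := congrArg (coeff · n) (weightGF_piFinset_Iic_eq M N)
  simp only [coeff_weightGF, Nat.cast_inj] at hgf
  -- the left set is that of `ncard_diffs_le`, with `nextTerm` and `diffs` unfolded
  exact (ncard_diffs_le _ n).trans (hgf.trans (ncard_partitionPairs M N n).symm)

/-- Theorem 1.8 (restated): the number of nonincreasing sequences
`δ = (δ_1, …, δ_N)` of nonnegative integers summing to `n` with
`0 ≤ δ_i − δ_{i+1} ≤ M + N − i` (convention `δ_{N+1} = 0`), equals the number of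
pairs `(π, μ)` with `|π| + |μ| = n`, all parts of `π` in `[M+1, M+N−1]` with
`M + i` appearing at most `N − i` times, and `μ` having at most `N` parts
each at most `M`. -/
theorem C_eq_D (M N n : ℕ) (hM : 0 < M) (hN : 0 < N) :
    {d : Fin N → ℕ | (∑ j, d j) = n ∧
        ∀ j : Fin N,
          (if h : j.1 + 1 < N then d ⟨j.1 + 1, h⟩ else 0) ≤ d j ∧
          d j - (if h : j.1 + 1 < N then d ⟨j.1 + 1, h⟩ else 0) ≤
            M + N - (j.1 + 1)}.ncard =
      {q : Partn × Partn | q.1.wt + q.2.wt = n ∧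
        (∀ x ∈ q.1.parts, M + 1 ≤ x ∧ x ≤ M + N - 1) ∧
        (∀ i, 1 ≤ i → i ≤ N - 1 → q.1.parts.count (M + i) ≤ N - i) ∧
        q.2.len ≤ N ∧ (∀ x ∈ q.2.parts, x ≤ M)}.ncard :=
  C_eq_D_general M N n
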